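/- (Proposition 1.) For every δ > 0 and every discount factor 0 < γ < 1, there exist reward functions R*, R̂ : S → ℝ and policies π_E, π1, π2 on the four-state MDP such that: (i) π_E maximizes V(R*, ·) over all policies; (ii) π_E also maximizes V(R̂, ·) over all policies; (iii) V(R*, π1) = −δγ/(1 − γ) < 0 = V(R*, π2), so π1 is arbitrarily worse than π2 under the true reward as δ grows; and (iv) V(R̂, π1) = V(R̂, π2). Concretely, one may take R* = (0, −δ, 1, 0), R̂ = (0, 0, 1, 0) on (s0, s1, s2, s3), π_E(s0) = b, π1(s0) = a, π2(s0) = c. -/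

import Mathlib

/-- Deterministic transition function: from `s0 = 0`, action `a : Fin 3`
leads to state `a.succ` (i.e. `a ↦ s1`, `b ↦ s2`, `c ↦ s3`); every other
state is fixed under every action. -/
def P (s : Fin 4) (a : Fin 3) : Fin 4 := if s = 0 then a.succ else s

/-- Trajectory of policy `π` started at `s0 = 0`. -/
def traj (π : Fin 4 → Fin 3) (t : ℕ) : Fin 4 := (fun s => P s (π s))^[t] 0

/-- Discounted value of policy `π` from `s0 = 0` under reward `R` and discount `γ`. -/
noncomputable def V (R : Fin 4 → ℝ) (γ : ℝ) (π : Fin 4 → Fin 3) : ℝ :=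
  ∑' t : ℕ, γ ^ t * R (traj π t)

/-! After one step every trajectory is absorbed in the state `(π s0).succ`, so
`V(R, π) = R s0 + γ/(1-γ) · R((π s0).succ)` only depends on the first action. The expert's first
action `b` leads to the state of largest reward under both `R*` and `R̂`, while `R̂` gives `s1`
and `s3` the same reward although `R*` penalises `s1` by `δ`. -/

@[simp]
theorem traj_zero (π : Fin 4 → Fin 3) : traj π 0 = 0 := rfl

theorem traj_succ (π : Fin 4 → Fin 3) (t : ℕ) : traj π (t + 1) = (π 0).succ := by
  induction t with
  | zero => simp [traj, P]
  | succ n ih =>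
    simp only [traj] at ih ⊢
    rw [Function.iterate_succ_apply', ih]
    simp [P, Fin.succ_ne_zero]

theorem hasSum_V (R : Fin 4 → ℝ) {γ : ℝ} (hγ : |γ| < 1) (π : Fin 4 → Fin 3) :
    HasSum (fun t => γ ^ t * R (traj π t)) (R 0 + γ / (1 - γ) * R (π 0).succ) := by
  have htail : HasSum (fun t => γ ^ (t + 1) * R (traj π (t + 1))) (γ / (1 - γ) * R (π 0).succ) := by
    have hshift : (fun t => γ ^ (t + 1) * R (traj π (t + 1))) = fun t => γ * R (π 0).succ * γ ^ t := by
      funext t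
      rw [traj_succ]
      ring
    rw [hshift, div_mul_eq_mul_div, div_eq_mul_inv]
    exact (hasSum_geometric_of_abs_lt_one hγ).mul_left (γ * R (π 0).succ)
  simpa using htail.zero_add (f := fun t => γ ^ t * R (traj π t))

theorem V_eq (R : Fin 4 → ℝ) {γ : ℝ} (hγ : |γ| < 1) (π : Fin 4 → Fin 3) :
    V R γ π = R 0 + γ / (1 - γ) * R (π 0).succ :=
  (hasSum_V R hγ π).tsum_eq

theorem V_le_V_of_reward_le (R : Fin 4 → ℝ) {γ : ℝ} (hγ0 : 0 ≤ γ) (hγ1 : γ < 1)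
    {π π' : Fin 4 → Fin 3} (h : R (π 0).succ ≤ R (π' 0).succ) : V R γ π ≤ V R γ π' := by
  have hγ : |γ| < 1 := by rwa [abs_of_nonneg hγ0]
  rw [V_eq R hγ, V_eq R hγ]
  have hcoeff : 0 ≤ γ / (1 - γ) := div_nonneg hγ0 (by linarith)
  gcongr

/-- Proposition 1: an IRL-recovered reward under which the expert is
optimal can hide arbitrarily large differences in true value between
non-expert policies. -/
theorem irl_reward_can_hide_differences (δ γ : ℝ) (hδ : 0 < δ)
    (hγ0 : 0 < γ) (hγ1 : γ < 1) :
    ∃ (Rstar Rhat : Fin 4 → ℝ) (πE π1 π2 : Fin 4 → Fin 3),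
      Rstar = ![0, -δ, 1, 0] ∧ Rhat = ![0, 0, 1, 0] ∧
      πE 0 = 1 ∧ π1 0 = 0 ∧ π2 0 = 2 ∧
      (∀ π : Fin 4 → Fin 3, V Rstar γ π ≤ V Rstar γ πE) ∧
      (∀ π : Fin 4 → Fin 3, V Rhat γ π ≤ V Rhat γ πE) ∧
      V Rstar γ π1 = -δ * γ / (1 - γ) ∧
      V Rstar γ π2 = 0 ∧
      V Rstar γ π1 < V Rstar γ π2 ∧
      V Rhat γ π1 = V Rhat γ π2 := by
  have hγ : |γ| < 1 := by rwa [abs_of_pos hγ0]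
  have hπ1 : V ![0, -δ, 1, 0] γ (fun _ => 0) = -δ * γ / (1 - γ) := by
    rw [V_eq _ hγ]
    simp only [Matrix.cons_val_zero, Fin.succ_zero_eq_one, Matrix.cons_val_one]
    ring
  have hπ2 : V ![0, -δ, 1, 0] γ (fun _ => 2) = 0 := by
    rw [V_eq _ hγ]
    simp
  refine ⟨_, _, fun _ => 1, fun _ => 0, fun _ => 2, rfl, rfl, rfl, rfl, rfl,
    fun π => V_le_V_of_reward_le _ hγ0.le hγ1 ?_, fun π => V_le_V_of_reward_le _ hγ0.le hγ1 ?_,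
    hπ1, hπ2, ?_, ?_⟩
  · have hδ1 : -δ ≤ 1 := by linarith
    generalize π 0 = a
    fin_cases a <;> simp [hδ1]
  · generalize π 0 = a
    fin_cases a <;> simp
  · rw [hπ1, hπ2]
    exact div_neg_of_neg_of_pos (mul_neg_of_neg_of_pos (neg_neg_of_pos hδ) hγ0) (sub_pos.2 hγ1)
  · rw [V_eq _ hγ, V_eq _ hγ]
    simp
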